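/- Fix x* > 0, t₁ > 0 and a sensor location x_m with 0 < x_m ≤ x*, and let u, v : [0,x*] → ℝ be continuous with t₁ ≤ min(τ*_u, τ*_v). Then the pressures at the respective filling times satisfy |p^u(x_m, τ*_u) − p^v(x_m, τ*_v)| ≤ 2·((x*)²/t₁)·M_{u,v}³·‖u − v‖, where M_{u,v} = exp(max(‖u‖,‖v‖)). (Note p^u(x_m, τ*_u) = 2 − F_u(x_m)/F_u(x*).) -/

import Mathlib

open Set

noncomputable def Fu (xs : ℝ) (h : 0 ≤ xs) (u : C(Icc (0:ℝ) xs, ℝ)) (x : ℝ) : ℝ :=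
  ∫ z in (0:ℝ)..x, Real.exp (-(u (projIcc 0 xs h z)))

noncomputable def Wu (xs : ℝ) (h : 0 ≤ xs) (u : C(Icc (0:ℝ) xs, ℝ)) (x : ℝ) : ℝ :=
  ∫ ξ in (0:ℝ)..x, Fu xs h u ξ

noncomputable def tau (xs : ℝ) (h : 0 ≤ xs) (u : C(Icc (0:ℝ) xs, ℝ)) : ℝ :=
  Wu xs h u xs


/-- Dimensionless pressure, given the moving front `Υ`:
`p(x,t) = 2 - F_u(x)/F_u(Υ(t))` behind the front (`x ≤ Υ t`) and `1` ahead of it. -/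
noncomputable def press (xs : ℝ) (h : 0 ≤ xs) (u : C(Icc (0:ℝ) xs, ℝ)) (Υ : ℝ → ℝ)
    (x t : ℝ) : ℝ :=
  if x ≤ Υ t then 2 - Fu xs h u x / Fu xs h u (Υ t) else 1

open intervalIntegral

/-!
At the filling time the front has reached `x*`, so `p^u(x_m, τ*_u) = 2 - F_u(x_m) / F_u(x*)`
and the claim is a perturbation bound for a quotient. Since `|e^{-a} - e^{-b}| ≤ M |a - b|`
for `|a|, |b| ≤ log M`, both `F_u(x_m) - F_v(x_m)` and `F_u(x*) - F_v(x*)` are at most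
`x* M ‖u - v‖`, and both `F`'s are at most `x* M`. The denominator `F_u(x*) F_v(x*)` is at
least `t₁ / M`, because `t₁ ≤ τ*_u = W_u(x*) ≤ x* F_u(x*)` and `F_v(x*) ≥ x* / M`.
-/

lemma Real.abs_exp_sub_exp_le (a b : ℝ) :
    |Real.exp a - Real.exp b| ≤ Real.exp (max a b) * |a - b| := by
  wlog hab : b ≤ a generalizing a b
  · rw [abs_sub_comm, abs_sub_comm a b, max_comm]
    exact this b a (le_of_not_ge hab)
  have h := mul_le_mul_of_nonneg_left (Real.add_one_le_exp (b - a)) (Real.exp_pos a).le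
  rw [mul_add_one, ← Real.exp_add, add_sub_cancel] at h
  rw [max_eq_left hab, abs_of_nonneg (sub_nonneg.2 (Real.exp_le_exp.2 hab)),
    abs_of_nonneg (sub_nonneg.2 hab)]
  linarith

lemma abs_div_sub_div_le {a b c d δ K L : ℝ} (hb : 0 < b) (hd : 0 < d) (hL : 0 < L)
    (hac : |a - c| ≤ δ) (hbd : |b - d| ≤ δ) (hc : |c| ≤ K) (hdK : d ≤ K) (hLbd : L ≤ b * d) :
    |a / b - c / d| ≤ 2 * K * δ / L := by
  have hδ : 0 ≤ δ := (abs_nonneg _).trans hac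
  have hK : 0 ≤ K := (abs_nonneg _).trans hc
  have hsplit : a / b - c / d = ((a - c) * d + c * (d - b)) / (b * d) := by
    field_simp
    ring
  calc |a / b - c / d| = |(a - c) * d + c * (d - b)| / (b * d) := by
        rw [hsplit, abs_div, abs_of_pos (mul_pos hb hd)]
    _ ≤ 2 * K * δ / (b * d) := by
        gcongr
        calc |(a - c) * d + c * (d - b)| ≤ |a - c| * |d| + |c| * |d - b| := by
              rw [← abs_mul, ← abs_mul]
              exact abs_add_le _ _
          _ ≤ δ * K + K * δ := by
              rw [abs_of_pos hd, abs_sub_comm d b]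
              gcongr
          _ = 2 * K * δ := by ring
    _ ≤ 2 * K * δ / L := by gcongr

namespace ContinuousMap

variable {α : Type*} [TopologicalSpace α] [CompactSpace α]

lemma abs_apply_le_norm (f : C(α, ℝ)) (x : α) : |f x| ≤ ‖f‖ :=
  f.norm_coe_le_norm x

lemma exp_neg_apply_le_exp_norm (f : C(α, ℝ)) (x : α) : Real.exp (-f x) ≤ Real.exp ‖f‖ :=
  Real.exp_le_exp.2 ((neg_le_abs _).trans (f.abs_apply_le_norm x))

lemma exp_neg_norm_le_exp_neg_apply (f : C(α, ℝ)) (x : α) : Real.exp (-‖f‖) ≤ Real.exp (-f x) :=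
  Real.exp_le_exp.2 (neg_le_neg ((le_abs_self _).trans (f.abs_apply_le_norm x)))

lemma abs_exp_neg_apply_sub_le (f g : C(α, ℝ)) (x : α) :
    |Real.exp (-f x) - Real.exp (-g x)| ≤ Real.exp (max ‖f‖ ‖g‖) * ‖f - g‖ :=
  calc |Real.exp (-f x) - Real.exp (-g x)|
      ≤ Real.exp (max (-f x) (-g x)) * |-f x - -g x| := Real.abs_exp_sub_exp_le _ _
    _ ≤ Real.exp (max ‖f‖ ‖g‖) * ‖f - g‖ := by
        rw [neg_sub_neg, abs_sub_comm]
        gcongr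
        · exact (neg_le_abs _).trans (f.abs_apply_le_norm x)
        · exact (neg_le_abs _).trans (g.abs_apply_le_norm x)
        · exact (f - g).abs_apply_le_norm x

end ContinuousMap

section Filling

variable {xs : ℝ} {h : 0 ≤ xs}

lemma intervalIntegrable_exp_neg_comp_projIcc (u : C(Icc (0:ℝ) xs, ℝ)) (a b : ℝ) :
    IntervalIntegrable (fun z => Real.exp (-u (projIcc 0 xs h z))) MeasureTheory.volume a b :=
  (by fun_prop : Continuous _).intervalIntegrable a b

lemma Fu_le_mul_exp_norm (u : C(Icc (0:ℝ) xs, ℝ)) {x : ℝ} (hx : 0 ≤ x) :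
    Fu xs h u x ≤ x * Real.exp ‖u‖ := by
  simpa [Fu] using integral_mono_on hx (intervalIntegrable_exp_neg_comp_projIcc u 0 x)
    intervalIntegrable_const (fun z _ => u.exp_neg_apply_le_exp_norm _)

lemma mul_exp_neg_norm_le_Fu (u : C(Icc (0:ℝ) xs, ℝ)) {x : ℝ} (hx : 0 ≤ x) :
    x * Real.exp (-‖u‖) ≤ Fu xs h u x := by
  simpa [Fu] using integral_mono_on hx intervalIntegrable_const
    (intervalIntegrable_exp_neg_comp_projIcc u 0 x)
    (fun z _ => u.exp_neg_norm_le_exp_neg_apply _)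

lemma Fu_pos (u : C(Icc (0:ℝ) xs, ℝ)) {x : ℝ} (hx : 0 < x) : 0 < Fu xs h u x :=
  (mul_pos hx (Real.exp_pos _)).trans_le (mul_exp_neg_norm_le_Fu u hx.le)

lemma Fu_mono (u : C(Icc (0:ℝ) xs, ℝ)) : Monotone (Fu xs h u) := by
  intro a b hab
  have hint := intervalIntegrable_exp_neg_comp_projIcc (h := h) u
  rw [Fu, Fu, ← integral_add_adjacent_intervals (hint 0 a) (hint a b), le_add_iff_nonneg_right]
  exact integral_nonneg hab fun z _ => (Real.exp_pos _).le

lemma abs_Fu_sub_Fu_le (u v : C(Icc (0:ℝ) xs, ℝ)) {x : ℝ} (hx : 0 ≤ x) :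
    |Fu xs h u x - Fu xs h v x| ≤ Real.exp (max ‖u‖ ‖v‖) * ‖u - v‖ * x := by
  rw [Fu, Fu, ← integral_sub (intervalIntegrable_exp_neg_comp_projIcc u 0 x)
    (intervalIntegrable_exp_neg_comp_projIcc v 0 x)]
  simpa [abs_of_nonneg hx] using norm_integral_le_of_norm_le_const (a := 0) (b := x)
    (f := fun z => Real.exp (-u (projIcc 0 xs h z)) - Real.exp (-v (projIcc 0 xs h z)))
    (fun z _ => u.abs_exp_neg_apply_sub_le v (projIcc 0 xs h z))

lemma intervalIntegrable_Fu (u : C(Icc (0:ℝ) xs, ℝ)) (a b : ℝ) :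
    IntervalIntegrable (Fu xs h u) MeasureTheory.volume a b :=
  (Fu_mono u).intervalIntegrable

lemma Wu_strictMonoOn (u : C(Icc (0:ℝ) xs, ℝ)) : StrictMonoOn (Wu xs h u) (Ici 0) := by
  intro a ha b _ hab
  have hint := intervalIntegrable_Fu (h := h) u
  rw [Wu, Wu, ← integral_add_adjacent_intervals (hint 0 a) (hint a b), lt_add_iff_pos_right]
  exact intervalIntegral_pos_of_pos_on (hint a b) (fun z hz => Fu_pos u (ha.trans_lt hz.1)) hab

lemma tau_nonneg (u : C(Icc (0:ℝ) xs, ℝ)) : 0 ≤ tau xs h u := by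
  simpa [tau, Wu] using (Wu_strictMonoOn (h := h) u).monotoneOn (mem_Ici.2 le_rfl) h h

lemma tau_le_mul_Fu (u : C(Icc (0:ℝ) xs, ℝ)) : tau xs h u ≤ xs * Fu xs h u xs := by
  simpa [tau, Wu] using integral_mono_on h (intervalIntegrable_Fu u 0 xs)
    intervalIntegrable_const (fun z hz => Fu_mono (h := h) u hz.2)

lemma front_tau_eq (u : C(Icc (0:ℝ) xs, ℝ)) {Υ : ℝ → ℝ}
    (hΥ : ∀ s ∈ Icc (0:ℝ) (tau xs h u), Υ s ∈ Icc 0 xs ∧ Wu xs h u (Υ s) = s) :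
    Υ (tau xs h u) = xs := by
  obtain ⟨hmem, hW⟩ := hΥ (tau xs h u) ⟨tau_nonneg u, le_rfl⟩
  exact (Wu_strictMonoOn u).injOn hmem.1 (mem_Ici.2 h) hW

lemma press_tau (u : C(Icc (0:ℝ) xs, ℝ)) {Υ : ℝ → ℝ}
    (hΥ : ∀ s ∈ Icc (0:ℝ) (tau xs h u), Υ s ∈ Icc 0 xs ∧ Wu xs h u (Υ s) = s)
    {x : ℝ} (hx : x ≤ xs) :
    press xs h u Υ x (tau xs h u) = 2 - Fu xs h u x / Fu xs h u xs := by
  rw [press, front_tau_eq u hΥ, if_pos hx]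

end Filling

/-- if `t₁ ≤ min(τ*_u, τ*_v)` then the pressures at the respective
filling times satisfy
`|p^u(x_m,τ*_u) - p^v(x_m,τ*_v)| ≤ 2·((x*)²/t₁)·M_{u,v}³·‖u - v‖`. -/
theorem stmt_18 (xs : ℝ) (hxs : 0 < xs) (t₁ : ℝ) (ht₁ : 0 < t₁)
    (xm : ℝ) (hxm0 : 0 < xm) (hxm : xm ≤ xs)
    (u v : C(Icc (0:ℝ) xs, ℝ)) (Υu Υv : ℝ → ℝ)
    (hΥu : ∀ s ∈ Icc (0:ℝ) (tau xs hxs.le u), Υu s ∈ Icc 0 xs ∧ Wu xs hxs.le u (Υu s) = s)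
    (hΥv : ∀ s ∈ Icc (0:ℝ) (tau xs hxs.le v), Υv s ∈ Icc 0 xs ∧ Wu xs hxs.le v (Υv s) = s)
    (ht₁τ : t₁ ≤ min (tau xs hxs.le u) (tau xs hxs.le v)) :
    |press xs hxs.le u Υu xm (tau xs hxs.le u) -
        press xs hxs.le v Υv xm (tau xs hxs.le v)| ≤
      2 * (xs ^ 2 / t₁) * Real.exp (max ‖u‖ ‖v‖) ^ 3 * ‖u - v‖ := by
  set M := Real.exp (max ‖u‖ ‖v‖)
  have hvM : Real.exp ‖v‖ ≤ M := Real.exp_le_exp.2 (le_max_right _ _)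
  have hFv : |Fu xs hxs.le v xm| ≤ xs * M := by
    rw [abs_of_pos (Fu_pos v hxm0)]
    exact (Fu_le_mul_exp_norm v hxm0.le).trans (by gcongr)
  have hFv' : Fu xs hxs.le v xs ≤ xs * M :=
    (Fu_le_mul_exp_norm v hxs.le).trans (by gcongr)
  have hdiff : |Fu xs hxs.le u xm - Fu xs hxs.le v xm| ≤ M * ‖u - v‖ * xs :=
    (abs_Fu_sub_Fu_le u v hxm0.le).trans (by gcongr)
  have hden : t₁ / M ≤ Fu xs hxs.le u xs * Fu xs hxs.le v xs :=
    calc t₁ / M ≤ xs * Fu xs hxs.le u xs / M := by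
          gcongr
          exact (ht₁τ.trans (min_le_left _ _)).trans (tau_le_mul_Fu u)
      _ = Fu xs hxs.le u xs * (xs * M⁻¹) := by ring
      _ ≤ Fu xs hxs.le u xs * (xs * Real.exp (-‖v‖)) := by
          rw [Real.exp_neg]
          gcongr
          exact (Fu_pos u hxs).le
      _ ≤ Fu xs hxs.le u xs * Fu xs hxs.le v xs := by
          gcongr
          · exact (Fu_pos u hxs).le
          · exact mul_exp_neg_norm_le_Fu v hxs.le
  rw [press_tau u hΥu hxm, press_tau v hΥv hxm, sub_sub_sub_cancel_left, abs_sub_comm]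
  calc _ ≤ 2 * (xs * M) * (M * ‖u - v‖ * xs) / (t₁ / M) :=
        abs_div_sub_div_le (Fu_pos u hxs) (Fu_pos v hxs) (by positivity) hdiff
          (abs_Fu_sub_Fu_le u v hxs.le) hFv hFv' hden
    _ = 2 * (xs ^ 2 / t₁) * M ^ 3 * ‖u - v‖ := by
        field_simp
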